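/- arXiv:1612.07964 — 2 statements merged into one kernel-verified Lean document; each statement's English description precedes it below -/
import Mathlib

section
/- Let X and Y be racks, y1 ≠ y2 in Y with y1 ▷ y2 = y2, and x1 ≠ x2 in X with x1 ▷ (x2 ▷ (x1 ▷ x2)) ≠ x2. Then the product rack X × Y is of type D, i.e. it contains a decomposable subrack R ⊔ S with elements r ∈ R, s ∈ S such that r ▷ (s ▷ (r ▷ s)) ≠ s. -/
open Rack

/-- The componentwise rack operation on the product `X × Y`. -/
def prodAct {X Y : Type*} [Rack X] [Rack Y] (p q : X × Y) : X × Y :=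
  (Shelf.act p.1 q.1, Shelf.act p.2 q.2)

section Aux

variable {Y : Type*} [Rack Y] (y₂ : Y)

/-- Every element of the forward orbit of `y₂` under `Shelf.act y₂` acts as `y₂` does. -/
lemma actT (n : ℕ) (z : Y) :
    Shelf.act ((Shelf.act y₂)^[n] y₂) z = Shelf.act y₂ z := by
  induction n generalizing z with
  | zero => rfl
  | succ n ih =>
    rw [Function.iterate_succ_apply']
    obtain ⟨w, rfl⟩ := (act' y₂).surjective z
    simp only [act'_apply]
    rw [← Shelf.self_distrib, ih w]

lemma fixT {y : Y} (hfix : Shelf.act y y₂ = y₂)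
    (hcomm : ∀ z, Shelf.act y (Shelf.act y₂ z) = Shelf.act y₂ (Shelf.act y z)) (n : ℕ) :
    Shelf.act y ((Shelf.act y₂)^[n] y₂) = (Shelf.act y₂)^[n] y₂ := by
  induction n with
  | zero => exact hfix
  | succ n ih =>
    rw [Function.iterate_succ_apply', hcomm, ih]

lemma orbit_trivial (h : Shelf.act y₂ y₂ = y₂) (n : ℕ) :
    (Shelf.act y₂)^[n] y₂ = y₂ := by
  induction n with
  | zero => rfl
  | succ n ih => rw [Function.iterate_succ_apply', ih, h]

end Aux

theorem stmt0 {X Y : Type*} [Rack X] [Rack Y]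
    (y₁ y₂ : Y) (hy12 : y₁ ≠ y₂) (hy : Shelf.act y₁ y₂ = y₂)
    (x₁ x₂ : X) (hx12 : x₁ ≠ x₂)
    (hx : Shelf.act x₁ (Shelf.act x₂ (Shelf.act x₁ x₂)) ≠ x₂) :
    ∃ R S : Set (X × Y),
      Disjoint R S ∧
      (∀ a ∈ R, ∀ b ∈ R, prodAct a b ∈ R) ∧
      (∀ a ∈ R, ∀ b ∈ S, prodAct a b ∈ S) ∧
      (∀ a ∈ S, ∀ b ∈ R, prodAct a b ∈ R) ∧
      (∀ a ∈ S, ∀ b ∈ S, prodAct a b ∈ S) ∧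
      ∃ r ∈ R, ∃ s ∈ S, prodAct r (prodAct s (prodAct r s)) ≠ s := by
  classical
  set T : Set Y := {z | ∃ n : ℕ, (Shelf.act y₂)^[n] y₂ = z} with hT
  set C : Set Y := {y | y ∉ T ∧ Shelf.act y y₂ = y₂ ∧
      ∀ z, Shelf.act y (Shelf.act y₂ z) = Shelf.act y₂ (Shelf.act y z)} with hC
  have hy₂T : y₂ ∈ T := ⟨0, rfl⟩
  -- y₁ ∈ C
  have hy₁comm : ∀ z, Shelf.act y₁ (Shelf.act y₂ z) = Shelf.act y₂ (Shelf.act y₁ z) := by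
    intro z; rw [Shelf.self_distrib, hy]
  have hy₁T : y₁ ∉ T := by
    rintro ⟨n, hn⟩
    have h1 : Shelf.act y₁ y₂ = Shelf.act y₂ y₂ := by rw [← hn, actT]
    have h2 : Shelf.act y₂ y₂ = y₂ := by rw [← h1, hy]
    have := orbit_trivial y₂ h2 n
    exact hy12 (by rw [← hn, this])
  have hy₁C : y₁ ∈ C := ⟨hy₁T, hy, hy₁comm⟩
  -- every element of T acts like y₂
  have actT' : ∀ t ∈ T, ∀ z, Shelf.act t z = Shelf.act y₂ z := by
    rintro t ⟨n, rfl⟩ z; exact actT y₂ n z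
  -- every element of C fixes T pointwise
  have fixT' : ∀ c ∈ C, ∀ t ∈ T, Shelf.act c t = t := by
    rintro c ⟨_, hfix, hcomm⟩ t ⟨n, rfl⟩; exact fixT y₂ hfix hcomm n
  -- closure C ◃ C ⊆ C
  have hCC : ∀ a ∈ C, ∀ b ∈ C, Shelf.act a b ∈ C := by
    rintro a ⟨haT, hafix, hacomm⟩ b ⟨hbT, hbfix, hbcomm⟩
    have hfix : Shelf.act (Shelf.act a b) y₂ = y₂ := by
      conv_lhs => rw [← hafix, ← Shelf.self_distrib, hbfix, hafix]
    refine ⟨?_, hfix, ?_⟩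
    · rintro ⟨n, hn⟩
      have h2 : Shelf.act y₂ y₂ = y₂ := by
        rw [← actT y₂ n y₂, hn, hfix]
      have h3 : (Shelf.act y₂)^[n] y₂ = y₂ := orbit_trivial y₂ h2 n
      have : Shelf.act a b = Shelf.act a y₂ := by rw [← hn, h3, hafix]
      exact hbT (by rw [(Rack.left_cancel a).mp this]; exact hy₂T)
    · intro z
      obtain ⟨w, rfl⟩ := (act' a).surjective z
      simp only [act'_apply]
      calc Shelf.act (Shelf.act a b) (Shelf.act y₂ (Shelf.act a w))
          = Shelf.act (Shelf.act a b) (Shelf.act a (Shelf.act y₂ w)) := by rw [hacomm]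
        _ = Shelf.act a (Shelf.act b (Shelf.act y₂ w)) := Shelf.self_distrib.symm
        _ = Shelf.act a (Shelf.act y₂ (Shelf.act b w)) := by rw [hbcomm]
        _ = Shelf.act y₂ (Shelf.act a (Shelf.act b w)) := hacomm _
        _ = Shelf.act y₂ (Shelf.act (Shelf.act a b) (Shelf.act a w)) := by
            rw [← Shelf.self_distrib]
  -- T ◃ C ⊆ C, via: (y₂ ◃ c) acts exactly like c
  have hTCact : ∀ c ∈ C, ∀ z, Shelf.act (Shelf.act y₂ c) z = Shelf.act c z := by
    rintro c ⟨_, hfix, hcomm⟩ z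
    obtain ⟨w, rfl⟩ := (act' y₂).surjective z
    simp only [act'_apply]
    rw [← Shelf.self_distrib, hcomm]
  have hTC : ∀ t ∈ T, ∀ c ∈ C, Shelf.act t c ∈ C := by
    intro t ht c hc
    rw [actT' t ht c]
    obtain ⟨hcT, hcfix, hccomm⟩ := hc
    refine ⟨?_, ?_, ?_⟩
    · rintro ⟨n, hn⟩
      have h1 : Shelf.act c y₂ = Shelf.act y₂ y₂ := by
        rw [← hTCact c ⟨hcT, hcfix, hccomm⟩ y₂, ← hn, actT]
      have h2 : Shelf.act y₂ y₂ = y₂ := by rw [← h1, hcfix]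
      have h3 : (Shelf.act y₂)^[n] y₂ = y₂ := orbit_trivial y₂ h2 n
      have : Shelf.act y₂ c = Shelf.act y₂ y₂ := by rw [← hn, h3, h2]
      exact hcT (by rw [(Rack.left_cancel y₂).mp this]; exact hy₂T)
    · rw [hTCact c ⟨hcT, hcfix, hccomm⟩ y₂, hcfix]
    · intro z
      rw [hTCact c ⟨hcT, hcfix, hccomm⟩ (Shelf.act y₂ z), hccomm,
        hTCact c ⟨hcT, hcfix, hccomm⟩ z]
  -- T ◃ T ⊆ T
  have hTT : ∀ t ∈ T, ∀ t' ∈ T, Shelf.act t t' ∈ T := by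
    rintro t ht t' ⟨n, rfl⟩
    rw [actT' t ht]
    exact ⟨n + 1, by rw [Function.iterate_succ_apply']⟩
  -- the product sets
  refine ⟨{p | p.2 ∈ C}, {p | p.2 ∈ T}, ?_, ?_, ?_, ?_, ?_, ⟨x₁, y₁⟩, hy₁C, ⟨x₂, y₂⟩, hy₂T, ?_⟩
  · rw [Set.disjoint_left]
    rintro p hp hp'
    exact hp.1 hp'
  · intro a ha b hb; exact hCC _ ha _ hb
  · intro a ha b hb
    show Shelf.act a.2 b.2 ∈ T
    rw [fixT' a.2 ha b.2 hb]; exact hb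
  · intro a ha b hb; exact hTC _ ha _ hb
  · intro a ha b hb; exact hTT _ ha _ hb
  · intro h
    exact hx (congrArg Prod.fst h)
end

section
/- Let q be even, x, y ∈ 𝔽_{q²} with x^q y + y^q x ≠ 0, and ζ₁,…,ζ₄ ∈ 𝔽_qˣ pairwise distinct (requires q > 4). For i ∈ {1,…,4}, define r_i as the 4×4 upper unitriangular matrix with (1,2)-entry xζᵢ⁻¹, (1,3)-entry yζᵢ, (1,4)-entry xy^q, (2,4)-entry y^qζᵢ, (3,4)-entry x^qζᵢ⁻¹, other off-diagonal entries 0. Then r_i r_j = r_j r_i if and only if i = j. -/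
/-!
The two products of such unitriangular matrices can differ only in the corner entry, and there the
sum of the two products' entries is `(x^q y + y^q x)(ζᵢ² + ζⱼ²) / (ζᵢ ζⱼ)`. In characteristic 2 a sum
vanishes iff its terms are equal, and squaring is injective, so the matrices commute iff `ζᵢ = ζⱼ`.
-/

open Matrix

theorem Matrix.unitriangular_mul_comm_iff {R : Type*} [CommRing R]
    (a b c d e a' b' c' d' e' : R) :
    !![1, a, b, c; 0, 1, 0, d; 0, 0, 1, e; 0, 0, 0, 1] *
        !![1, a', b', c'; 0, 1, 0, d'; 0, 0, 1, e'; 0, 0, 0, 1] =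
      !![1, a', b', c'; 0, 1, 0, d'; 0, 0, 1, e'; 0, 0, 0, 1] *
        !![1, a, b, c; 0, 1, 0, d; 0, 0, 1, e; 0, 0, 0, 1] ↔
      a * d' + b * e' = a' * d + b' * e := by
  constructor
  · intro h
    have h03 := congrFun (congrFun h 0) 3
    simp only [mul_apply, of_apply, cons_val', cons_val_fin_one, cons_val_zero, cons_val,
      cons_val_one, Fin.sum_univ_four, one_mul, mul_one] at h03
    linear_combination h03
  · intro h
    ext i j
    fin_cases i <;> fin_cases j <;> simp [mul_apply, Fin.sum_univ_four, add_comm]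
    linear_combination h

theorem stmt16_general (q : ℕ) (K : Type*) [Field K] [CharP K 2]
    (x y : K) (hxy : x ^ q * y + y ^ q * x ≠ 0)
    (ζ : Fin 4 → K) (hζ0 : ∀ i, ζ i ≠ 0)
    (hinj : Function.Injective ζ) :
    let r : Fin 4 → Matrix (Fin 4) (Fin 4) K := fun i =>
      !![1, x * (ζ i)⁻¹, y * ζ i, x * y ^ q;
         0, 1, 0, y ^ q * ζ i;
         0, 0, 1, x ^ q * (ζ i)⁻¹;
         0, 0, 0, 1]
    ∀ i j : Fin 4, r i * r j = r j * r i ↔ i = j := by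
  intro r i j
  have hi := hζ0 i
  have hj := hζ0 j
  have corner_sum : x * (ζ i)⁻¹ * (y ^ q * ζ j) + y * ζ i * (x ^ q * (ζ j)⁻¹) +
      (x * (ζ j)⁻¹ * (y ^ q * ζ i) + y * ζ j * (x ^ q * (ζ i)⁻¹)) =
      (x ^ q * y + y ^ q * x) * (ζ i ^ 2 + ζ j ^ 2) / (ζ i * ζ j) := by
    field_simp
    ring
  simp only [r]
  rw [unitriangular_mul_comm_iff, ← CharTwo.add_eq_zero, corner_sum, div_eq_zero_iff]
  simp only [mul_eq_zero, hxy, hi, hj, or_false, false_or]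
  rw [CharTwo.add_eq_zero, CharTwo.sq_inj, hinj.eq_iff]

theorem stmt16 (m q : ℕ) (hq : q = 2 ^ m) (hm : 0 < m) (K : Type*) [Field K]
    [Fintype K] [CharP K 2] (hK : Fintype.card K = q ^ 2)
    (x y : K) (hxy : x ^ q * y + y ^ q * x ≠ 0)
    (ζ : Fin 4 → K) (hζ0 : ∀ i, ζ i ≠ 0) (hζq : ∀ i, ζ i ^ q = ζ i)
    (hinj : Function.Injective ζ) :
    let r : Fin 4 → Matrix (Fin 4) (Fin 4) K := fun i =>
      !![1, x * (ζ i)⁻¹, y * ζ i, x * y ^ q;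
         0, 1, 0, y ^ q * ζ i;
         0, 0, 1, x ^ q * (ζ i)⁻¹;
         0, 0, 0, 1]
    ∀ i j : Fin 4, r i * r j = r j * r i ↔ i = j :=
  stmt16_general q K x y hxy ζ hζ0 hinj
end
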